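/- arXiv:2012.03492 — 3 statements merged into one kernel-verified Lean document; each statement's English description precedes it below -/
import Mathlib

section
/- Let n be a positive integer such that sup_{λ ∈ (0,1]} ψ(λ) > 1/n. Then there exists a unique β > 0 satisfying the fixed-point equation β = ψ*(β) − 1/n. -/
/-- `ψ(λ) = 1 - log₂((2p)^λ + (2p̄)^λ)` where `p̄ = 1 - p`; powers are real powers. -/
noncomputable def psi (p lam : ℝ) : ℝ :=
  1 - Real.logb 2 ((2 * p) ^ lam + (2 * (1 - p)) ^ lam)

/-- `ψ*(β) = sup_{λ > 0} (ψ(λ) - λ β)`. -/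
noncomputable def psiStar (p β : ℝ) : ℝ :=
  sSup {y : ℝ | ∃ lam : ℝ, 0 < lam ∧ y = psi p lam - lam * β}

/-!
For `λ > 0` we have `(2p̄)^λ > 1`, so `ψ(λ) < 1` and hence `ψ*(β) ≤ 1` for `β ≥ 0`. As a supremum
of affine functions of `β` with slopes `-λ < 0`, `ψ*` is convex and antitone on `[0, ∞)`, hence
continuous on `(0, ∞)`, and `g(β) := β - ψ*(β)` is strictly increasing there. Picking `λ` with
`ψ(λ) > 1/n`, the value `ψ*(β) ≥ ψ(λ) - λβ` forces `g(β₀) ≤ -1/n` for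
`β₀ = (ψ(λ) - 1/n) / (1 + λ)`, while `g(1) ≥ 0 ≥ -1/n`; the intermediate value theorem gives the
fixed point and strict monotonicity its uniqueness.
-/

open Set

section PsiStar

variable {p : ℝ}

lemma psi_lt_one (hp0 : 0 < p) (hp : p < 1 / 2) {lam : ℝ} (hlam : 0 < lam) : psi p lam < 1 := by
  have h2p : 0 < (2 * p) ^ lam := Real.rpow_pos_of_pos (by linarith) lam
  have h2q : 1 < (2 * (1 - p)) ^ lam := Real.one_lt_rpow (by linarith) hlam
  have := Real.logb_pos one_lt_two (by linarith : 1 < (2 * p) ^ lam + (2 * (1 - p)) ^ lam)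
  rw [psi]
  linarith

lemma psiStar_le_one (hp0 : 0 < p) (hp : p < 1 / 2) {β : ℝ} (hβ : 0 ≤ β) : psiStar p β ≤ 1 := by
  refine csSup_le ⟨_, 1, one_pos, rfl⟩ ?_
  rintro _ ⟨lam, hlam, rfl⟩
  nlinarith [psi_lt_one hp0 hp hlam]

lemma le_psiStar (hp0 : 0 < p) (hp : p < 1 / 2) {β lam : ℝ} (hβ : 0 ≤ β) (hlam : 0 < lam) :
    psi p lam - lam * β ≤ psiStar p β := by
  refine le_csSup ⟨1, ?_⟩ ⟨lam, hlam, rfl⟩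
  rintro _ ⟨lam', hlam', rfl⟩
  nlinarith [psi_lt_one hp0 hp hlam']

lemma psiStar_antitoneOn (hp0 : 0 < p) (hp : p < 1 / 2) : AntitoneOn (psiStar p) (Ici 0) := by
  intro β₁ hβ₁ β₂ _ hβ
  refine csSup_le ⟨_, 1, one_pos, rfl⟩ ?_
  rintro _ ⟨lam, hlam, rfl⟩
  nlinarith [le_psiStar hp0 hp hβ₁ hlam]

lemma psiStar_convexOn (hp0 : 0 < p) (hp : p < 1 / 2) : ConvexOn ℝ (Ici 0) (psiStar p) := by
  refine ⟨convex_Ici 0, fun x hx y hy a b ha hb hab => ?_⟩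
  refine csSup_le ⟨_, 1, one_pos, rfl⟩ ?_
  rintro _ ⟨lam, hlam, rfl⟩
  calc psi p lam - lam * (a • x + b • y)
      = a * (psi p lam - lam * x) + b * (psi p lam - lam * y) := by
        simp only [smul_eq_mul]
        linear_combination (-psi p lam) * hab
    _ ≤ a • psiStar p x + b • psiStar p y := by
        simp only [smul_eq_mul]
        gcongr
        exacts [le_psiStar hp0 hp hx hlam, le_psiStar hp0 hp hy hlam]

lemma psiStar_continuousOn (hp0 : 0 < p) (hp : p < 1 / 2) : ContinuousOn (psiStar p) (Ioi 0) := by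
  simpa using (psiStar_convexOn hp0 hp).continuousOn_interior

lemma strictMonoOn_sub_psiStar (hp0 : 0 < p) (hp : p < 1 / 2) :
    StrictMonoOn (fun β => β - psiStar p β) (Ici 0) := by
  intro β₁ hβ₁ β₂ hβ₂ hβ
  have := psiStar_antitoneOn hp0 hp hβ₁ hβ₂ hβ.le
  dsimp only
  linarith

end PsiStar

theorem stmt_5_general (p : ℝ) (hp0 : 0 < p) (hp : p < 1 / 2) (n : ℕ)
    (hsup : (1 : ℝ) / n < sSup {y : ℝ | ∃ lam : ℝ, 0 < lam ∧ lam ≤ 1 ∧ y = psi p lam}) :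
    ∃! β : ℝ, 0 < β ∧ β = psiStar p β - 1 / n := by
  have hn : (0 : ℝ) ≤ 1 / n := by positivity
  obtain ⟨_, ⟨lam, hlam, -, rfl⟩, hpsi⟩ :=
    exists_lt_of_lt_csSup (by exact ⟨_, 1, one_pos, le_rfl, rfl⟩) hsup
  set β₀ := (psi p lam - 1 / n) / (1 + lam)
  have hβ₀ : 0 < β₀ := div_pos (by linarith) (by linarith)
  have hβ₀_le : β₀ ≤ 1 := by
    rw [div_le_one (by linarith)]
    linarith [psi_lt_one hp0 hp hlam]
  have hlow : β₀ - psiStar p β₀ ≤ -(1 / n) := by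
    have hβ₀_eq : β₀ * (1 + lam) = psi p lam - 1 / n := div_mul_cancel₀ _ (by linarith)
    linarith [le_psiStar hp0 hp hβ₀.le hlam]
  have hhigh : -(1 / n) ≤ 1 - psiStar p 1 := by linarith [psiStar_le_one hp0 hp zero_le_one]
  have hcont : ContinuousOn (fun β => β - psiStar p β) (Icc β₀ 1) :=
    continuousOn_id.sub <| (psiStar_continuousOn hp0 hp).mono fun β hβ => hβ₀.trans_le hβ.1
  obtain ⟨β, hβ, hβ_eq⟩ := intermediate_value_Icc hβ₀_le hcont ⟨hlow, hhigh⟩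
  refine ⟨β, ⟨hβ₀.trans_le hβ.1, by linarith⟩, fun γ ⟨hγ, hγ_eq⟩ => ?_⟩
  refine (strictMonoOn_sub_psiStar hp0 hp).injOn hγ.le (hβ₀.le.trans hβ.1) ?_
  dsimp only at hβ_eq ⊢
  linarith

theorem stmt_5 (p : ℝ) (hp0 : 0 < p) (hp : p < 1 / 2) (n : ℕ) (hn : 0 < n)
    (hsup : (1 : ℝ) / n < sSup {y : ℝ | ∃ lam : ℝ, 0 < lam ∧ lam ≤ 1 ∧ y = psi p lam}) :
    ∃! β : ℝ, 0 < β ∧ β = psiStar p β - 1 / n :=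
  stmt_5_general p hp0 hp n hsup
end

section
/- For every η > 0 there exists a unique R > 0 satisfying ψ*(ηR) = (η + 1)R. -/
open Set

noncomputable def posConj (f : ℝ → ℝ) (β : ℝ) : ℝ :=
  sSup {y : ℝ | ∃ lam : ℝ, 0 < lam ∧ y = f lam - lam * β}

theorem psiStar_eq_posConj (p : ℝ) : psiStar p = posConj (psi p) := rfl

section posConj

variable {f : ℝ → ℝ} {M β lam : ℝ}

theorem posConj_bddAbove (hf : ∀ lam, 0 < lam → f lam ≤ M) (hβ : 0 ≤ β) :
    BddAbove {y : ℝ | ∃ lam : ℝ, 0 < lam ∧ y = f lam - lam * β} := by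
  refine ⟨M, ?_⟩
  rintro _ ⟨lam, hlam, rfl⟩
  nlinarith [hf lam hlam]

theorem le_posConj (hf : ∀ lam, 0 < lam → f lam ≤ M) (hβ : 0 ≤ β) (hlam : 0 < lam) :
    f lam - lam * β ≤ posConj f β :=
  le_csSup (posConj_bddAbove hf hβ) ⟨lam, hlam, rfl⟩

theorem posConj_antitoneOn (hf : ∀ lam, 0 < lam → f lam ≤ M) :
    AntitoneOn (posConj f) (Ici 0) := by
  intro β hβ β' _ hββ'
  refine csSup_le ⟨_, 1, one_pos, rfl⟩ ?_
  rintro _ ⟨lam, hlam, rfl⟩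
  calc f lam - lam * β' ≤ f lam - lam * β := by nlinarith
    _ ≤ posConj f β := le_posConj hf hβ hlam

theorem posConj_convexOn (hf : ∀ lam, 0 < lam → f lam ≤ M) :
    ConvexOn ℝ (Ici 0) (posConj f) := by
  refine ⟨convex_Ici 0, fun β₁ h₁ β₂ h₂ a b ha hb hab => ?_⟩
  refine csSup_le ⟨_, 1, one_pos, rfl⟩ ?_
  rintro _ ⟨lam, hlam, rfl⟩
  have e₁ := mul_le_mul_of_nonneg_left (le_posConj hf h₁ hlam) ha
  have e₂ := mul_le_mul_of_nonneg_left (le_posConj hf h₂ hlam) hb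
  simp only [smul_eq_mul]
  obtain rfl : a = 1 - b := by linarith
  nlinarith

theorem exists_posConj_pos (hf : ∀ lam, 0 < lam → f lam ≤ M) (hlam : 0 < lam)
    (hpos : 0 < f lam) : ∃ β > 0, 0 < posConj f β := by
  refine ⟨f lam / (2 * lam), by positivity, ?_⟩
  have := le_posConj hf (β := f lam / (2 * lam)) (by positivity) hlam
  have : lam * (f lam / (2 * lam)) = f lam / 2 := by field_simp
  linarith

end posConj

theorem psi_le_one {p lam : ℝ} (hp0 : 0 ≤ p) (hp : p ≤ 1 / 2) (hlam : 0 ≤ lam) :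
    psi p lam ≤ 1 := by
  have h₁ : 0 ≤ (2 * p) ^ lam := Real.rpow_nonneg (by linarith) _
  have h₂ : 1 ≤ (2 * (1 - p)) ^ lam := Real.one_le_rpow (by linarith) hlam
  have : 0 ≤ Real.logb 2 ((2 * p) ^ lam + (2 * (1 - p)) ^ lam) :=
    Real.logb_nonneg one_lt_two (by linarith)
  rw [psi]
  linarith

theorem psi_pos {p lam : ℝ} (hp0 : 0 ≤ p) (hp1 : p ≤ 1) (hp : p ≠ 1 / 2) (hlam0 : 0 < lam)
    (hlam1 : lam < 1) : 0 < psi p lam := by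
  have hsum : (2 * p) ^ lam + (2 * (1 - p)) ^ lam < 2 := by
    have := (Real.strictConcaveOn_rpow hlam0 hlam1).2
      (mem_Ici.2 (by linarith : (0 : ℝ) ≤ 2 * p))
      (mem_Ici.2 (by linarith : (0 : ℝ) ≤ 2 * (1 - p))) (fun h => hp (by linarith))
      one_half_pos one_half_pos (add_halves 1)
    simp only [smul_eq_mul] at this
    rw [show 1 / 2 * (2 * p) + 1 / 2 * (2 * (1 - p)) = (1 : ℝ) by ring, Real.one_rpow] at this
    linarith
  have hpos : 0 < (2 * p) ^ lam + (2 * (1 - p)) ^ lam := by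
    have h₁ := Real.rpow_nonneg (show (0 : ℝ) ≤ 2 * p by linarith) lam
    have h₂ := Real.rpow_nonneg (show (0 : ℝ) ≤ 2 * (1 - p) by linarith) lam
    rcases hp.lt_or_gt with h | h
    · linarith [Real.rpow_pos_of_pos (show (0 : ℝ) < 2 * (1 - p) by linarith) lam]
    · linarith [Real.rpow_pos_of_pos (show (0 : ℝ) < 2 * p by linarith) lam]
  have : Real.logb 2 ((2 * p) ^ lam + (2 * (1 - p)) ^ lam) < 1 := by
    rw [Real.logb_lt_iff_lt_rpow one_lt_two hpos, Real.rpow_one]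
    exact hsum
  rw [psi]
  linarith

theorem existsUnique_pos_eq_mul {G : ℝ → ℝ} {κ r₀ : ℝ} (hκ : 0 < κ)
    (hanti : AntitoneOn G (Ioi 0)) (hcont : ContinuousOn G (Ioi 0)) (hr₀ : 0 < r₀)
    (hGr₀ : 0 < G r₀) : ∃! R, 0 < R ∧ G R = κ * R := by
  have hstrict : StrictAntiOn (fun R => G R - κ * R) (Ioi 0) := fun x hx y hy hxy => by
    have := hanti hx hy hxy.le
    nlinarith
  set a := min r₀ (G r₀ / (2 * κ))
  have ha : 0 < a := lt_min hr₀ (by positivity)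
  have hGa : κ * a < G a :=
    calc κ * a ≤ κ * (G r₀ / (2 * κ)) := mul_le_mul_of_nonneg_left (min_le_right _ _) hκ.le
      _ < G r₀ := by field_simp; linarith
      _ ≤ G a := hanti ha hr₀ (min_le_left _ _)
  set b := a + G a / κ
  have hab : a < b := lt_add_of_pos_right a (div_pos (by nlinarith) hκ)
  have hGb : G b < κ * b :=
    calc G b ≤ G a := hanti ha (ha.trans hab) hab.le
      _ < κ * b := by rw [mul_add, mul_div_cancel₀ _ hκ.ne']; nlinarith
  have hIcc : Icc a b ⊆ Ioi 0 := fun x hx => ha.trans_le hx.1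
  have hcont' : ContinuousOn (fun R => G R - κ * R) (Icc a b) :=
    (hcont.mono hIcc).sub (continuousOn_const.mul continuousOn_id)
  obtain ⟨R, hR, hR0⟩ := intermediate_value_Icc' hab.le hcont'
    (show (0 : ℝ) ∈ Icc (G b - κ * b) (G a - κ * a) from ⟨by linarith, by linarith⟩)
  have hR0 : G R - κ * R = 0 := hR0
  refine ⟨R, ⟨hIcc hR, by linarith⟩, fun R' ⟨hR', hR'eq⟩ => ?_⟩
  exact hstrict.injOn hR' (hIcc hR) (by simp only [hR'eq, sub_self, hR0])

theorem stmt_7 (p : ℝ) (hp0 : 0 < p) (hp : p < 1 / 2) (η : ℝ) (hη : 0 < η) :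
    ∃! R : ℝ, 0 < R ∧ psiStar p (η * R) = (η + 1) * R := by
  have hbdd : ∀ lam, 0 < lam → psi p lam ≤ 1 := fun lam h => psi_le_one hp0.le hp.le h.le
  obtain ⟨β₀, hβ₀, hβ₀pos⟩ := exists_posConj_pos hbdd one_half_pos
    (psi_pos hp0.le (by linarith) hp.ne one_half_pos one_half_lt_one)
  have hmaps : MapsTo (η * ·) (Ioi 0) (Ioi 0) := fun R hR => mul_pos hη hR
  have hanti : AntitoneOn (fun R => posConj (psi p) (η * R)) (Ioi 0) := fun x hx y hy hxy =>
    posConj_antitoneOn hbdd (mem_Ici_of_Ioi (hmaps hx)) (mem_Ici_of_Ioi (hmaps hy))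
      (mul_le_mul_of_nonneg_left hxy hη.le)
  have hcont : ContinuousOn (fun R => posConj (psi p) (η * R)) (Ioi 0) := by
    have := (posConj_convexOn hbdd).continuousOn_interior
    rw [interior_Ici] at this
    exact this.comp (continuousOn_const.mul continuousOn_id) hmaps
  rw [psiStar_eq_posConj]
  exact existsUnique_pos_eq_mul (by linarith) hanti hcont (div_pos hβ₀ hη)
    (by rwa [mul_div_cancel₀ _ hη.ne'])
end

section
/- Let η > 0 and let R > 0 satisfy ψ*(ηR) = (η + 1)R. Let n be a positive integer with 1/n ≤ R, and let β_n > 0 satisfy β_n = ψ*(β_n) − 1/n. Then β_n ≥ ηR. Consequently min{1/n, β_n/η} ≥ min{1/n, R}. -/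
lemma psiSet_upper (p β : ℝ) (hp0 : 0 < p) (hp : p < 1 / 2) (hβ : 0 ≤ β) :
    ∀ y ∈ {y : ℝ | ∃ lam : ℝ, 0 < lam ∧ y = psi p lam - lam * β}, y ≤ 1 := by
  rintro y ⟨lam, hlam, rfl⟩
  have h1 : (1 : ℝ) ≤ 2 * (1 - p) := by linarith
  have h2 : (1 : ℝ) ≤ (2 * (1 - p)) ^ lam := Real.one_le_rpow h1 hlam.le
  have h3 : (0 : ℝ) ≤ (2 * p) ^ lam := Real.rpow_nonneg (by linarith) lam
  have h4 : (0 : ℝ) ≤ Real.logb 2 ((2 * p) ^ lam + (2 * (1 - p)) ^ lam) :=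
    Real.logb_nonneg one_lt_two (by linarith)
  have h5 : 0 ≤ lam * β := mul_nonneg hlam.le hβ
  unfold psi
  linarith

lemma psiStar_anti (p : ℝ) (hp0 : 0 < p) (hp : p < 1 / 2) {β β' : ℝ}
    (hβ' : 0 ≤ β') (h : β' ≤ β) : psiStar p β ≤ psiStar p β' := by
  have hbdd : BddAbove {y : ℝ | ∃ lam : ℝ, 0 < lam ∧ y = psi p lam - lam * β'} :=
    ⟨1, fun y hy => psiSet_upper p β' hp0 hp hβ' y hy⟩
  refine csSup_le ⟨psi p 1 - 1 * β, ⟨1, one_pos, rfl⟩⟩ ?_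
  rintro y ⟨lam, hlam, rfl⟩
  have h1 : psi p lam - lam * β ≤ psi p lam - lam * β' := by
    have := mul_le_mul_of_nonneg_left h hlam.le
    linarith
  exact h1.trans (le_csSup hbdd ⟨lam, hlam, rfl⟩)

theorem stmt_8 (p : ℝ) (hp0 : 0 < p) (hp : p < 1 / 2)
    (η R : ℝ) (hη : 0 < η) (hR : 0 < R) (hRfix : psiStar p (η * R) = (η + 1) * R)
    (n : ℕ) (hn : 0 < n) (hnR : (1 : ℝ) / n ≤ R)
    (βn : ℝ) (hβpos : 0 < βn) (hβfix : βn = psiStar p βn - 1 / n) :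
    η * R ≤ βn ∧ min ((1 : ℝ) / n) R ≤ min ((1 : ℝ) / n) (βn / η) := by
  have key : η * R ≤ βn := by
    by_contra hcon
    push_neg at hcon
    have hmono : psiStar p (η * R) ≤ psiStar p βn :=
      psiStar_anti p hp0 hp hβpos.le hcon.le
    have hexp : (η + 1) * R = η * R + R := by ring
    linarith
  refine ⟨key, min_le_min le_rfl ?_⟩
  rw [le_div_iff₀ hη]
  linarith
end
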